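/- arXiv:1611.00266 — 4 statements merged into one kernel-verified Lean document; each statement's English description precedes it below -/
import Mathlib

section
/- In the seamless coupling algorithm, the transformed coarse ensemble X̃_C^j = ∑_{i,k} T̃_{i,j} N D_{k,i} (w_F^i)^{-1} X̂_C^k preserves the coarse weighted mean: (1/N) ∑_j X̃_C^j = ∑_k ŵ_C^k X̂_C^k. -/
open Finset

theorem stmt4 (d N : ℕ) (hN : 0 < N)
    (XC : Fin N → EuclideanSpace ℝ (Fin d))
    (wC wF : Fin N → ℝ)
    (hwC : ∀ k, 0 ≤ wC k) (hwCs : ∑ k, wC k = 1)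
    (hwF : ∀ j, 0 < wF j) (hwFs : ∑ j, wF j = 1)
    (D T : Fin N → Fin N → ℝ)
    (hD : ∀ i j, 0 ≤ D i j) (hT : ∀ i j, 0 ≤ T i j)
    (hDrow : ∀ i, ∑ j, D i j = wC i) (hDcol : ∀ j, ∑ i, D i j = wF j)
    (hTrow : ∀ i, ∑ j, T i j = wF i) (hTcol : ∀ j, ∑ i, T i j = 1 / N) :
    (1 / (N : ℝ)) •
        (∑ j, (∑ i, ∑ k, (T i j * (N : ℝ) * D k i * (wF i)⁻¹) • XC k)) =
      ∑ k, wC k • XC k := by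
  have hN' : (N : ℝ) ≠ 0 := Nat.cast_ne_zero.mpr hN.ne'
  have step : ∀ i, ∑ j, ∑ k, (T i j * (N : ℝ) * D k i * (wF i)⁻¹) • XC k
      = ∑ k, ((N : ℝ) * D k i) • XC k := by
    intro i
    rw [Finset.sum_comm]
    refine Finset.sum_congr rfl fun k _ => ?_
    rw [← Finset.sum_smul]
    congr 1
    simp_rw [mul_assoc]
    rw [← Finset.sum_mul, hTrow]
    field_simp [(hwF i).ne']
  rw [Finset.sum_comm]
  simp_rw [step]
  rw [Finset.sum_comm, Finset.smul_sum]
  refine Finset.sum_congr rfl fun k _ => ?_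
  rw [← Finset.sum_smul, ← Finset.mul_sum, hDrow k, smul_smul]
  congr 1
  field_simp
end

section
/- Let D be a coupling matrix between probability vectors p (row sums) and q (column sums) minimizing the transport cost ∑_{i,j} D_{i,j} ||Z1^i - Z2^j||^2. If the points Z1^i and Z2^j are real numbers sorted in increasing order (d = 1), then the optimal D satisfies the monotonicity (northwest corner) property: if i < i' and j > j', then D_{i,j} * D_{i',j'} = 0. -/
open Finset

theorem stmt9 (N : ℕ) (Z1 Z2 : Fin N → ℝ)
    (hZ1 : StrictMono Z1) (hZ2 : StrictMono Z2)
    (p q : Fin N → ℝ) (hp : ∀ i, 0 ≤ p i) (hq : ∀ j, 0 ≤ q j)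
    (D : Fin N → Fin N → ℝ) (hD : ∀ i j, 0 ≤ D i j)
    (hrow : ∀ i, ∑ j, D i j = p i) (hcol : ∀ j, ∑ i, D i j = q j)
    (hopt : ∀ D' : Fin N → Fin N → ℝ, (∀ i j, 0 ≤ D' i j) →
      (∀ i, ∑ j, D' i j = p i) → (∀ j, ∑ i, D' i j = q j) →
      ∑ i, ∑ j, D i j * ‖Z1 i - Z2 j‖ ^ 2 ≤ ∑ i, ∑ j, D' i j * ‖Z1 i - Z2 j‖ ^ 2) :
    ∀ i i' j j' : Fin N, i < i' → j' < j → D i j * D i' j' = 0 := by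
  intro i i' j j' hii hjj
  by_contra hne
  have h1 : D i j ≠ 0 := left_ne_zero_of_mul hne
  have h2 : D i' j' ≠ 0 := right_ne_zero_of_mul hne
  have hii' : i ≠ i' := ne_of_lt hii
  have hjj' : j ≠ j' := (ne_of_lt hjj).symm
  set ε := min (D i j) (D i' j') with hεdef
  have hεpos : 0 < ε := lt_min (lt_of_le_of_ne (hD i j) (Ne.symm h1))
    (lt_of_le_of_ne (hD i' j') (Ne.symm h2))
  have hε1 : ε ≤ D i j := min_le_left _ _
  have hε2 : ε ≤ D i' j' := min_le_right _ _
  set D' : Fin N → Fin N → ℝ := fun x y => D x y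
      + (if x = i ∧ y = j' then ε else 0) + (if x = i' ∧ y = j then ε else 0)
      - (if x = i ∧ y = j then ε else 0) - (if x = i' ∧ y = j' then ε else 0) with hD'def
  have hnn : ∀ x y, 0 ≤ D' x y := by
    intro x y
    simp only [hD'def]
    by_cases hc : x = i ∧ y = j
    · obtain ⟨rfl, rfl⟩ := hc
      simp [hii', hjj', Ne.symm hii', Ne.symm hjj']
      linarith
    · by_cases hc' : x = i' ∧ y = j'
      · obtain ⟨rfl, rfl⟩ := hc'
        simp [hii', hjj', Ne.symm hii', Ne.symm hjj']
        linarith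
      · rw [if_neg hc, if_neg hc']
        have := hD x y
        split_ifs <;> linarith
  have hrow' : ∀ x, ∑ y, D' x y = p x := by
    intro x
    simp only [hD'def, Finset.sum_add_distrib, Finset.sum_sub_distrib, ite_and]
    simp [Finset.sum_ite_eq', hrow x]
    try ring
  have hcol' : ∀ y, ∑ x, D' x y = q y := by
    intro y
    simp only [hD'def, Finset.sum_add_distrib, Finset.sum_sub_distrib, ite_and]
    simp [Finset.sum_ite_eq', hcol y]
    try ring
  have key := hopt D' hnn hrow' hcol'
  have hsum : ∑ x, ∑ y, D' x y * ‖Z1 x - Z2 y‖ ^ 2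
      = (∑ x, ∑ y, D x y * ‖Z1 x - Z2 y‖ ^ 2)
        + ε * ‖Z1 i - Z2 j'‖ ^ 2 + ε * ‖Z1 i' - Z2 j‖ ^ 2
        - ε * ‖Z1 i - Z2 j‖ ^ 2 - ε * ‖Z1 i' - Z2 j'‖ ^ 2 := by
    simp only [hD'def, add_mul, sub_mul, ite_mul, zero_mul, Finset.sum_add_distrib,
      Finset.sum_sub_distrib, ite_and]
    simp [Finset.sum_ite_eq']
    try ring
  rw [hsum] at key
  have hzz1 : Z1 i < Z1 i' := hZ1 hii
  have hzz2 : Z2 j' < Z2 j := hZ2 hjj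
  simp only [Real.norm_eq_abs, sq_abs] at key
  nlinarith [key, mul_pos hεpos (mul_pos (sub_pos.2 hzz1) (sub_pos.2 hzz2))]
end

section
/- Suppose the level-l difference variance satisfies V_l ≤ c h_l^β with h_l = 2^{-l} h_0 and sample sizes N_l = ⌈ε^{-2} 2^{-(3/2)l}⌉ with β = 2. Then the total estimator variance ∑_{l=0}^L V_l / N_l is bounded by c' ε^2 for a constant c' independent of L and ε. -/
open Finset

theorem stmt15 (c h0 : ℝ) (hc : 0 < c) (hh0 : 0 < h0)
    (V : ℕ → ℝ) (hVnn : ∀ l, 0 ≤ V l)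
    (hV : ∀ l, V l ≤ c * (h0 * (2 : ℝ) ^ (-(l : ℝ))) ^ 2) :
    ∃ c' > 0, ∀ ε : ℝ, 0 < ε → ∀ L : ℕ,
      ∑ l ∈ Finset.range (L + 1),
          V l / ((⌈ε ^ (-2 : ℤ) * (2 : ℝ) ^ (-(3 / 2 : ℝ) * (l : ℝ))⌉₊ : ℝ)) ≤
        c' * ε ^ 2 := by
  set r : ℝ := (2 : ℝ) ^ (-(1 / 2 : ℝ)) with hr
  have hr0 : 0 ≤ r := Real.rpow_nonneg (by norm_num) _
  have hr1 : r < 1 := by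
    rw [hr]
    exact Real.rpow_lt_one_of_one_lt_of_neg (by norm_num) (by norm_num)
  have hinv : 0 < (1 - r)⁻¹ := inv_pos.2 (by linarith)
  have hS : HasSum (fun l : ℕ => r ^ l) (1 - r)⁻¹ :=
    hasSum_geometric_of_lt_one hr0 hr1
  refine ⟨c * h0 ^ 2 * (1 - r)⁻¹,
    mul_pos (mul_pos hc (pow_pos hh0 2)) hinv, ?_⟩
  intro ε hε L
  have key : ∀ l : ℕ,
      V l / ((⌈ε ^ (-2 : ℤ) * (2 : ℝ) ^ (-(3 / 2 : ℝ) * (l : ℝ))⌉₊ : ℝ)) ≤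
        c * h0 ^ 2 * ε ^ 2 * r ^ l := by
    intro l
    set x : ℝ := ε ^ (-2 : ℤ) * (2 : ℝ) ^ (-(3 / 2 : ℝ) * (l : ℝ)) with hx
    have hxpos : 0 < x := by
      apply mul_pos
      · positivity
      · exact Real.rpow_pos_of_pos (by norm_num) _
    have hceil : x ≤ (⌈x⌉₊ : ℝ) := Nat.le_ceil x
    have h1 : V l / (⌈x⌉₊ : ℝ) ≤ V l / x :=
      div_le_div_of_nonneg_left (hVnn l) hxpos hceil
    have h2 : V l / x ≤ (c * (h0 * (2 : ℝ) ^ (-(l : ℝ))) ^ 2) / x :=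
      div_le_div_of_nonneg_right (hV l) hxpos.le
    refine (h1.trans h2).trans (le_of_eq ?_)
    have hrl : r ^ l = (2 : ℝ) ^ (-(1 / 2 : ℝ) * (l : ℝ)) := by
      rw [hr, ← Real.rpow_natCast ((2:ℝ) ^ (-(1/2:ℝ))) l,
        ← Real.rpow_mul (by norm_num : (0:ℝ) ≤ 2)]
    have hxinv : x⁻¹ = ε ^ 2 * (2 : ℝ) ^ ((3 / 2 : ℝ) * (l : ℝ)) := by
      rw [hx, mul_inv, ← zpow_neg, neg_neg, neg_mul,
        Real.rpow_neg (by norm_num : (0:ℝ) ≤ 2), inv_inv]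
      norm_num
    have hsq : ((2 : ℝ) ^ (-(l : ℝ))) ^ 2 = (2 : ℝ) ^ (-(l : ℝ) * 2) := by
      rw [← Real.rpow_natCast ((2:ℝ) ^ (-(l:ℝ))) 2,
        ← Real.rpow_mul (by norm_num : (0:ℝ) ≤ 2)]
      norm_num
    have hcomb : (2 : ℝ) ^ (-(l : ℝ) * 2) * (2 : ℝ) ^ ((3 / 2 : ℝ) * (l : ℝ))
        = (2 : ℝ) ^ (-(1 / 2 : ℝ) * (l : ℝ)) := by
      rw [← Real.rpow_add (by norm_num : (0:ℝ) < 2)]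
      congr 1; ring
    rw [div_eq_mul_inv, hxinv, hrl, mul_pow, hsq]
    calc c * (h0 ^ 2 * (2:ℝ) ^ (-(l:ℝ) * 2)) * (ε ^ 2 * (2:ℝ) ^ ((3/2:ℝ) * (l:ℝ)))
        = c * h0 ^ 2 * ε ^ 2 * ((2:ℝ) ^ (-(l:ℝ) * 2) * (2:ℝ) ^ ((3/2:ℝ) * (l:ℝ))) := by
          ring
      _ = c * h0 ^ 2 * ε ^ 2 * (2:ℝ) ^ (-(1/2:ℝ) * (l:ℝ)) := by rw [hcomb]
  have hsum : ∑ l ∈ Finset.range (L + 1), r ^ l ≤ (1 - r)⁻¹ := by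
    have := Summable.sum_le_tsum (Finset.range (L + 1))
      (fun i _ => pow_nonneg hr0 i) hS.summable
    rwa [hS.tsum_eq] at this
  calc ∑ l ∈ Finset.range (L + 1),
          V l / ((⌈ε ^ (-2 : ℤ) * (2 : ℝ) ^ (-(3 / 2 : ℝ) * (l : ℝ))⌉₊ : ℝ))
      ≤ ∑ l ∈ Finset.range (L + 1), c * h0 ^ 2 * ε ^ 2 * r ^ l :=
        Finset.sum_le_sum fun l _ => key l
    _ = c * h0 ^ 2 * ε ^ 2 * ∑ l ∈ Finset.range (L + 1), r ^ l := by
        rw [Finset.mul_sum]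
    _ ≤ c * h0 ^ 2 * ε ^ 2 * (1 - r)⁻¹ :=
        mul_le_mul_of_nonneg_left hsum (by positivity)
    _ = c * h0 ^ 2 * (1 - r)⁻¹ * ε ^ 2 := by ring
end

section
/- With N_l = ⌈ε^{-2} 2^{-(3/2)l}⌉ samples on level l, per-sample model cost c_m 2^{γ l} with γ = 1, and L = ⌈log(ε^{-1})/log 2⌉ levels, the total forward model cost ∑_{l=0}^L N_l c_m 2^l is O(ε^{-2}) as ε → 0. -/
/-! The ceiling in `N_l` adds at most one sample per level, so the cost is at most
`ε⁻² ∑ 2^(-(3/2)l) 2^l + ∑_{l ≤ L} 2^l`. The first sum is geometric with ratio `2^(-1/2)`, hence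
bounded by `4`; the second is below `2^(L+1) ≤ 4ε⁻¹ ≤ 4ε⁻²` since `L = ⌈log₂ ε⁻¹⌉`. -/

open Finset Real

lemma sum_natCeil_mul_le {ι : Type*} (s : Finset ι) {a w : ι → ℝ}
    (ha : ∀ i ∈ s, 0 ≤ a i) (hw : ∀ i ∈ s, 0 ≤ w i) :
    ∑ i ∈ s, (⌈a i⌉₊ : ℝ) * w i ≤ ∑ i ∈ s, a i * w i + ∑ i ∈ s, w i := by
  rw [← sum_add_distrib]
  refine sum_le_sum fun i hi => ?_
  calc (⌈a i⌉₊ : ℝ) * w i ≤ (a i + 1) * w i :=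
        mul_le_mul_of_nonneg_right (Nat.ceil_lt_add_one (ha i hi)).le (hw i hi)
    _ = a i * w i + w i := by ring

lemma geom_sum_inv_sqrt_two_le_four (n : ℕ) : ∑ l ∈ range n, (√2)⁻¹ ^ l ≤ 4 := by
  have hsqrt : 4 / 3 < √2 := by rw [Real.lt_sqrt (by norm_num)]; norm_num
  have hr : (√2)⁻¹ ≤ 3 / 4 := by rw [inv_le_comm₀ (by positivity) (by norm_num)]; linarith
  calc ∑ l ∈ range n, (√2)⁻¹ ^ l ≤ (√2)⁻¹ ^ 0 / (1 - (√2)⁻¹) := by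
        rw [range_eq_Ico]; exact geom_sum_Ico_le_of_lt_one (by positivity) (by linarith)
    _ ≤ 4 := by rw [pow_zero, div_le_iff₀ (by linarith)]; linarith

lemma sum_range_two_pow_le (n : ℕ) : ∑ l ∈ range n, (2 : ℝ) ^ l ≤ 2 ^ n := by
  rw [geom_sum_eq (by norm_num) n]; norm_num

lemma rpow_natCeil_logb_le {b x : ℝ} (hb : 1 < b) (hx : 1 ≤ x) :
    b ^ ⌈logb b x⌉₊ ≤ b * x := by
  have hceil := Nat.ceil_lt_add_one (logb_nonneg hb hx)
  calc b ^ ⌈logb b x⌉₊ = b ^ (⌈logb b x⌉₊ : ℝ) := (rpow_natCast b _).symm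
    _ ≤ b ^ (logb b x + 1) := rpow_le_rpow_of_exponent_le hb.le hceil.le
    _ = b * x := by
      rw [rpow_add (by linarith), rpow_logb (by linarith) hb.ne' (by linarith), rpow_one, mul_comm]

lemma two_rpow_neg_three_halves_mul_two_pow (l : ℕ) :
    (2 : ℝ) ^ (-(3 / 2 : ℝ) * l) * 2 ^ l = (√2)⁻¹ ^ l := by
  rw [sqrt_eq_rpow, ← rpow_neg zero_le_two, ← rpow_natCast, ← rpow_natCast, ← rpow_mul zero_le_two,
    ← rpow_add two_pos]
  ring_nf

lemma sum_samples_mul_two_pow_le {ε : ℝ} (hε : 0 < ε) (hε1 : ε < 1) :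
    ∑ l ∈ range (⌈log ε⁻¹ / log 2⌉₊ + 1),
        (⌈ε ^ (-2 : ℤ) * (2 : ℝ) ^ (-(3 / 2 : ℝ) * l)⌉₊ : ℝ) * 2 ^ l ≤ 8 * ε ^ (-2 : ℤ) := by
  set L := ⌈log ε⁻¹ / log 2⌉₊
  have hε_inv : 1 ≤ ε⁻¹ := (one_le_inv₀ hε).2 hε1.le
  have hε_inv_le : ε⁻¹ ≤ ε ^ (-2 : ℤ) := by
    rw [zpow_neg, zpow_two, mul_inv]; nlinarith
  have hvariance : ∑ l ∈ range (L + 1), ε ^ (-2 : ℤ) * (2 : ℝ) ^ (-(3 / 2 : ℝ) * l) * 2 ^ l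
      ≤ 4 * ε ^ (-2 : ℤ) := by
    simp_rw [mul_assoc, two_rpow_neg_three_halves_mul_two_pow, ← mul_sum]
    rw [mul_comm]
    exact mul_le_mul_of_nonneg_right (geom_sum_inv_sqrt_two_le_four _) (by positivity)
  have hcost : ∑ l ∈ range (L + 1), (2 : ℝ) ^ l ≤ 4 * ε ^ (-2 : ℤ) :=
    calc ∑ l ∈ range (L + 1), (2 : ℝ) ^ l ≤ 2 * 2 ^ L := by
          rw [← pow_succ']; exact sum_range_two_pow_le _
      _ ≤ 2 * (2 * ε⁻¹) := by gcongr; exact rpow_natCeil_logb_le one_lt_two hε_inv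
      _ ≤ 4 * ε ^ (-2 : ℤ) := by linarith
  calc _ ≤ _ + _ := sum_natCeil_mul_le _ (fun _ _ => by positivity) (fun _ _ => by positivity)
    _ ≤ 8 * ε ^ (-2 : ℤ) := by linarith

theorem stmt16 (cm : ℝ) (hcm : 0 < cm) :
    ∃ C > 0, ∀ ε : ℝ, 0 < ε → ε < 1 →
      ∑ l ∈ Finset.range (⌈Real.log ε⁻¹ / Real.log 2⌉₊ + 1),
          (⌈ε ^ (-2 : ℤ) * (2 : ℝ) ^ (-(3 / 2 : ℝ) * (l : ℝ))⌉₊ : ℝ) *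
            (cm * 2 ^ l) ≤
        C * ε ^ (-2 : ℤ) := by
  refine ⟨cm * 8, by positivity, fun ε hε hε1 => ?_⟩
  simp_rw [mul_left_comm _ cm, ← mul_sum, mul_assoc]
  exact mul_le_mul_of_nonneg_left (sum_samples_mul_two_pow_le hε hε1) hcm.le
end
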